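/- Let C ⊆ F^n be an 𝔽_q-linear additive conjucyclic code and D = Ψ(C). Then C is alternating dual-containing (C^{⊥_a} ⊆ C) if and only if D is symplectic dual-containing (D^{⊥_s} ⊆ D). -/
import Mathlib


/-- The map `Ψ : F^n → K^{2n}`,
`Ψ(α₀,…,α_{n−1}) = (Tr(βα₀),…,Tr(βα_{n−1}), Tr(β̄α₀),…,Tr(β̄α_{n−1}))`, where `β̄ = β^q`. -/
def Psi (q n : ℕ) {K F : Type*} [Field K] [Field F] (Tr : F → K) (β : F)
    (α : Fin n → F) : Fin (2 * n) → K :=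
  fun i =>
    if h : (i : ℕ) < n then Tr (β * α ⟨(i : ℕ), h⟩)
    else Tr (β ^ q * α ⟨(i : ℕ) - n, by have := i.isLt; omega⟩)

/-- The conjucyclic shift `T : F^n → F^n`, `T(c₀,…,c_{n−1}) = (c̄_{n−1}, c₀,…,c_{n−2})`
with `c̄ = c^q`. -/
def Tshift (q n : ℕ) {F : Type*} [Field F] (c : Fin n → F) : Fin n → F :=
  fun i =>
    if _h : (i : ℕ) = 0 then (c ⟨n - 1, by have := i.isLt; omega⟩) ^ q
    else c ⟨(i : ℕ) - 1, by have := i.isLt; omega⟩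

/-- The alternating inner product on `F^n`:
`⟨u,v⟩_a = (β̄² − β²) Σ_{i=0}^{n−1} (u_i v̄_i − ū_i v_i)`, where `x̄ = x^q`. -/
def altInner (q n : ℕ) {F : Type*} [Field F] (β : F) (u v : Fin n → F) : F :=
  ((β ^ q) ^ 2 - β ^ 2) * ∑ i : Fin n, (u i * (v i) ^ q - (u i) ^ q * v i)

/-- The symplectic inner product on `K^{2n}`:
`⟨u,v⟩_s = Σ_{i=0}^{n−1} (u_i v_{n+i} − u_{n+i} v_i)`. -/
def sympInner (n : ℕ) {K : Type*} [Field K] (u v : Fin (2 * n) → K) : K :=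
  ∑ i : Fin n,
    (u ⟨(i : ℕ), by have := i.isLt; omega⟩ * v ⟨n + (i : ℕ), by have := i.isLt; omega⟩ -
     u ⟨n + (i : ℕ), by have := i.isLt; omega⟩ * v ⟨(i : ℕ), by have := i.isLt; omega⟩)

/-- Let `C ⊆ F^n` be an `𝔽_q`-linear additive conjucyclic code and `D = Ψ(C)`.
Then `C` is alternating dual-containing (`C^{⊥_a} ⊆ C`) if and only if `D` is symplectic
dual-containing (`D^{⊥_s} ⊆ D`). -/
theorem stmt9 (q n : ℕ) (hn : 0 < n) {K F : Type*} [Field K] [Fintype K] [Field F] [Fintype F]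
    [Algebra K F] (hK : Fintype.card K = q) (hF : Fintype.card F = q ^ 2)
    (β : F) (hβ : ∀ x : F, x ≠ 0 → ∃ k : ℕ, x = β ^ k)
    (Tr : F → K) (hTr : ∀ x : F, algebraMap K F (Tr x) = x + x ^ q)
    (C : Submodule K (Fin n → F)) (hC : ∀ c ∈ C, Tshift q n c ∈ C) :
    {v : Fin n → F | ∀ u ∈ C, altInner q n β u v = 0} ⊆ (C : Set (Fin n → F)) ↔
      {w : Fin (2 * n) → K |
          ∀ u ∈ Psi q n Tr β '' (C : Set (Fin n → F)), sympInner n u w = 0} ⊆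
        Psi q n Tr β '' (C : Set (Fin n → F)) := by
  classical
  -- Basic field-theoretic setup
  have hinjKF : Function.Injective (algebraMap K F) := (algebraMap K F).injective
  have hq2 : 2 ≤ q := by
    have := Fintype.one_lt_card (α := K)
    omega
  -- characteristic
  obtain ⟨p, hcharK⟩ := CharP.exists K
  haveI : CharP K p := hcharK
  obtain ⟨e, hpprime, hqpe⟩ := FiniteField.card K p
  haveI : Fact p.Prime := ⟨hpprime⟩
  haveI hcharF : CharP F p := charP_of_injective_algebraMap hinjKF p
  rw [hK] at hqpe
  -- Frobenius facts
  have hfrobsub : ∀ x y : F, (x - y) ^ q = x ^ q - y ^ q := by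
    intro x y; rw [hqpe]; exact sub_pow_char_pow x y e
  have hfrobadd : ∀ x y : F, (x + y) ^ q = x ^ q + y ^ q := by
    intro x y; rw [hqpe]; exact add_pow_char_pow x y p e
  have hKfix : ∀ a : K, a ^ q = a := by
    intro a; rw [← hK]; exact FiniteField.pow_card a
  have hβqq : (β ^ q) ^ q = β := by
    rw [← pow_mul, ← pow_two]; rw [← hF]; exact FiniteField.pow_card β
  -- β² ≠ (β^q)²
  have hβ0 : β ≠ 0 := by
    intro h0
    have hcard : 2 < Fintype.card F := by
      rw [hF]; nlinarith
    have : (Finset.univ : Finset F).card ≤ ({0, 1} : Finset F).card := by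
      apply Finset.card_le_card
      intro x _
      rcases eq_or_ne x 0 with hx | hx
      · simp [hx]
      · obtain ⟨k, hk⟩ := hβ x hx
        rw [h0] at hk
        rcases Nat.eq_zero_or_pos k with hk0 | hk0
        · simp [hk, hk0]
        · rw [zero_pow (by omega)] at hk; exact absurd hk hx
    have h2 : ({0, 1} : Finset F).card ≤ 2 := Finset.card_insert_le _ _ |>.trans (by simp)
    rw [Finset.card_univ] at this
    omega
  have hkey : (β ^ q) ^ 2 ≠ β ^ 2 := by
    intro heq
    set u : Fˣ := Units.mk0 β hβ0 with hu
    have hord : orderOf u = q ^ 2 - 1 := by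
      rw [orderOf_eq_card_of_forall_mem_zpowers, Nat.card_units, Nat.card_eq_fintype_card, hF]
      intro x
      obtain ⟨k, hk⟩ := hβ (x : F) (Units.ne_zero x)
      rw [Subgroup.mem_zpowers_iff]
      refine ⟨(k : ℤ), ?_⟩
      apply Units.ext
      rw [zpow_natCast, Units.val_pow_eq_pow_val, hu, Units.val_mk0, ← hk]
    have hb : β ^ (2 * q - 2) = 1 := by
      have h1 : β ^ (2 * q) = β ^ 2 := by
        rw [mul_comm, pow_mul, heq]
      have h2 : β ^ (2 * q - 2) * β ^ 2 = 1 * β ^ 2 := by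
        rw [← pow_add, one_mul]
        have : 2 * q - 2 + 2 = 2 * q := by omega
        rw [this, h1]
      exact mul_right_cancel₀ (pow_ne_zero 2 hβ0) h2
    have hu1 : u ^ (2 * q - 2) = 1 := by
      apply Units.ext
      rw [Units.val_pow_eq_pow_val, hu, Units.val_mk0, hb, Units.val_one]
    have hdvd : orderOf u ∣ 2 * q - 2 := orderOf_dvd_of_pow_eq_one hu1
    rw [hord] at hdvd
    have hle : q ^ 2 - 1 ≤ 2 * q - 2 := Nat.le_of_dvd (by omega) hdvd
    have : q * q ≥ 2 * q := Nat.mul_le_mul_right q hq2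
    rw [pow_two] at hle
    omega
  have hkey' : β ^ 2 - (β ^ q) ^ 2 ≠ 0 := sub_ne_zero.mpr (Ne.symm hkey)
  -- Trace is additive / K-linear
  have hTrAdd : ∀ x y : F, Tr (x + y) = Tr x + Tr y := by
    intro x y
    apply hinjKF
    rw [map_add, hTr, hTr, hTr, hfrobadd]; ring
  have hTrSub : ∀ x y : F, Tr (x - y) = Tr x - Tr y := by
    intro x y
    apply hinjKF
    rw [map_sub, hTr, hTr, hTr, hfrobsub]; ring
  -- Psi evaluation lemmas
  have hPsi_lo : ∀ (α : Fin n → F) (i : Fin n) (h : (i : ℕ) < 2 * n),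
      Psi q n Tr β α ⟨(i : ℕ), h⟩ = Tr (β * α i) := by
    intro α i h
    simp only [Psi]
    rw [dif_pos i.isLt]
  have hPsi_hi : ∀ (α : Fin n → F) (i : Fin n) (h : n + (i : ℕ) < 2 * n),
      Psi q n Tr β α ⟨n + (i : ℕ), h⟩ = Tr (β ^ q * α i) := by
    intro α i h
    have h1 : Psi q n Tr β α ⟨n + (i : ℕ), h⟩ =
        Tr (β ^ q * α ⟨n + (i : ℕ) - n, by omega⟩) :=
      dif_neg (by omega : ¬ n + (i : ℕ) < n)
    rw [h1]
    have h2 : (⟨n + (i : ℕ) - n, by omega⟩ : Fin n) = i := by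
      apply Fin.ext
      exact Nat.add_sub_cancel_left n (i : ℕ)
    rw [h2]
  -- Psi is injective
  have hPsiSub : ∀ u v : Fin n → F,
      Psi q n Tr β (u - v) = Psi q n Tr β u - Psi q n Tr β v := by
    intro u v
    funext i
    simp only [Psi, Pi.sub_apply]
    split <;> rw [mul_sub, hTrSub]
  have hinj : Function.Injective (Psi q n Tr β) := by
    intro u v huv
    have h0 : Psi q n Tr β (u - v) = 0 := by
      rw [hPsiSub, huv, sub_self]
    have : u - v = 0 := by
      funext i
      have e1 : β * (u - v) i + β ^ q * ((u - v) i) ^ q = 0 := by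
        have := congrFun h0 ⟨(i : ℕ), by omega⟩
        rw [hPsi_lo, Pi.zero_apply] at this
        have := congrArg (algebraMap K F) this
        rw [hTr, map_zero, mul_pow] at this
        exact this
      have e2 : β ^ q * (u - v) i + β * ((u - v) i) ^ q = 0 := by
        have := congrFun h0 ⟨n + (i : ℕ), by omega⟩
        rw [hPsi_hi, Pi.zero_apply] at this
        have := congrArg (algebraMap K F) this
        rw [hTr, map_zero, mul_pow, hβqq] at this
        exact this
      have hz : (β ^ 2 - (β ^ q) ^ 2) * (u - v) i = 0 := by
        linear_combination β * e1 - β ^ q * e2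
      have := mul_eq_zero.mp hz
      rcases this with h | h
      · exact absurd h hkey'
      · exact h
    have := sub_eq_zero.mp this
    exact this
  -- Psi is surjective (by cardinality)
  have hsurj : Function.Surjective (Psi q n Tr β) := by
    have hcard : Fintype.card (Fin n → F) = Fintype.card (Fin (2 * n) → K) := by
      rw [Fintype.card_fun, Fintype.card_fun, Fintype.card_fin, Fintype.card_fin, hF, hK,
        ← pow_mul]
    exact ((Fintype.bijective_iff_injective_and_card _).mpr ⟨hinj, hcard⟩).surjective
  -- The pairing identity
  have hpair : ∀ u v : Fin n → F,
      algebraMap K F (sympInner n (Psi q n Tr β u) (Psi q n Tr β v)) =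
        -(altInner q n β u v) := by
    intro u v
    unfold sympInner altInner
    rw [map_sum, ← neg_mul, Finset.mul_sum]
    apply Finset.sum_congr rfl
    intro i _
    rw [hPsi_lo, hPsi_lo, hPsi_hi, hPsi_hi, map_sub, map_mul, map_mul, hTr, hTr, hTr, hTr]
    simp only [mul_pow, hβqq]
    ring
  have hzero_iff : ∀ u v : Fin n → F,
      sympInner n (Psi q n Tr β u) (Psi q n Tr β v) = 0 ↔ altInner q n β u v = 0 := by
    intro u v
    constructor
    · intro h
      have := hpair u v
      rw [h, map_zero] at this
      exact neg_eq_zero.mp this.symm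
    · intro h
      apply hinjKF
      rw [hpair, h, map_zero, neg_zero]
  -- The set identity
  have hset : {w : Fin (2 * n) → K |
        ∀ u ∈ Psi q n Tr β '' (C : Set (Fin n → F)), sympInner n u w = 0} =
      Psi q n Tr β '' {v : Fin n → F | ∀ u ∈ C, altInner q n β u v = 0} := by
    ext w
    constructor
    · intro hw
      obtain ⟨v, rfl⟩ := hsurj w
      exact ⟨v, fun u hu => (hzero_iff u v).mp (hw _ ⟨u, hu, rfl⟩), rfl⟩
    · rintro ⟨v, hv, rfl⟩ u' ⟨u, hu, rfl⟩
      exact (hzero_iff u v).mpr (hv u hu)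
  rw [hset]
  exact (Set.image_subset_image_iff hinj).symm
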